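/- Let d ≥ 2 and let A be a matrix with the Frolov lattice properties (1°) and (2°). Then there is a constant C(A,d) > 0, depending only on A and d, such that for all a > 1 the dispersion of the Frolov point set satisfies disp(F(a,A)) ≤ C(A,d) a^{-d}. -/

import Mathlib

/-!
Rescaling the coordinates by a diagonal matrix of determinant one turns any box of volume
`ℓ ^ d` into a cube of side `ℓ` and preserves both `|det A|` and property (1°); in particular
no nonzero point of the rescaled lattice lies in the open unit cube. Minkowski's theorem, applied
to boxes that are long in one direction and thin (`1 / d`) in the others, then yields `d`
lattice vectors of bounded size forming a diagonally dominant, hence invertible, matrix `P`.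
The adjugate of `Pᵀ` spans a sublattice of the dual lattice with bounded generators, so the dual
lattice has covering radius bounded in terms of `d` and `|det A|` only. A cube of side
`ℓ = 2 · (covering radius) + 1` therefore contains a dual lattice point, and undoing the
rescaling gives `disp F(a, A) ≤ ℓ ^ d / a ^ d`.
-/

open Matrix MeasureTheory
open scoped Nat

section Lattice

variable {ι : Type*} [Fintype ι] [DecidableEq ι]

theorem exists_ne_zero_abs_mulVec_intCast_le [Nonempty ι] (M : Matrix ι ι ℝ) (hM : M.det ≠ 0)
    (r : ι → ℝ) (hr : ∀ i, 0 ≤ r i) (hvol : |M.det| ≤ ∏ i, r i) :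
    ∃ m : ι → ℤ, m ≠ 0 ∧ ∀ i, |(M *ᵥ fun j => (m j : ℝ)) i| ≤ r i := by
  have hcols : LinearIndependent ℝ Mᵀ :=
    linearIndependent_rows_of_det_ne_zero (by rwa [det_transpose])
  let b : Module.Basis ι ℝ (ι → ℝ) :=
    basisOfLinearIndependentOfCardEqFinrank hcols (Module.finrank_fintype_fun_eq_card ℝ).symm
  have hb : ⇑b = Mᵀ := coe_basisOfLinearIndependentOfCardEqFinrank hcols _
  have : Countable (Submodule.span ℤ (Set.range b)).toAddSubgroup :=
    inferInstanceAs (Countable (Submodule.span ℤ (Set.range b)))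
  have hvol_box : ENNReal.ofReal |Mᵀ.det| * 2 ^ Fintype.card ι ≤ volume (Set.Icc (-r) r) := by
    have h2 : (2 : ENNReal) ^ Fintype.card ι = ENNReal.ofReal (2 ^ Fintype.card ι) := by simp
    rw [Real.volume_Icc_pi, det_transpose, h2, ← ENNReal.ofReal_mul (abs_nonneg _),
      ← ENNReal.ofReal_prod_of_nonneg fun i _ => by simp only [Pi.neg_apply]; linarith [hr i]]
    refine ENNReal.ofReal_le_ofReal ?_
    simp only [Pi.neg_apply, sub_neg_eq_add, ← two_mul, Finset.prod_mul_distrib,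
      Finset.prod_const, Finset.card_univ]
    rw [mul_comm]
    exact mul_le_mul_of_nonneg_left hvol (by positivity)
  obtain ⟨⟨x, hxL⟩, hx0, hxbox⟩ :=
    exists_ne_zero_mem_lattice_of_measure_mul_two_pow_le_measure (s := Set.Icc (-r) r)
      (ZSpan.isAddFundamentalDomain' b volume) (fun x hx => ⟨neg_le_neg hx.2, neg_le.1 hx.1⟩)
      (convex_Icc _ _) isCompact_Icc
      (by rwa [ZSpan.volume_fundamentalDomain, Module.finrank_fintype_fun_eq_card, hb])
  replace hx0 : x ≠ 0 := fun h => hx0 (Subtype.ext h)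
  replace hxbox : x ∈ Set.Icc (-r) r := hxbox
  obtain ⟨m, rfl⟩ := (Submodule.mem_span_range_iff_exists_fun ℤ).1 hxL
  have hx : ∑ i, m i • b i = M *ᵥ fun j => (m j : ℝ) := by
    ext i
    simp [hb, mulVec, dotProduct, mul_comm]
  rw [hx] at hxbox hx0
  refine ⟨m, ?_, fun i => abs_le.2 ⟨hxbox.1 i, hxbox.2 i⟩⟩
  rintro rfl
  simp [← Pi.zero_def] at hx0

theorem det_ne_zero_of_one_le_abs_diag (P : Matrix ι ι ℝ) (hdiag : ∀ k, 1 ≤ |P k k|)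
    (hoff : ∀ i k, i ≠ k → |P i k| ≤ 1 / Fintype.card ι) : P.det ≠ 0 := by
  refine det_ne_zero_of_sum_row_lt_diag fun k => ?_
  have hn : (0 : ℝ) < Fintype.card ι := by exact_mod_cast Fintype.card_pos_iff.2 ⟨k⟩
  simp only [Real.norm_eq_abs]
  calc ∑ j ∈ Finset.univ.erase k, |P k j| ≤ ∑ j ∈ Finset.univ.erase k, 1 / (Fintype.card ι : ℝ) :=
        Finset.sum_le_sum fun j hj => hoff k j (Finset.ne_of_mem_erase hj).symm
    _ < 1 := by
        rw [Finset.sum_const, Finset.card_erase_of_mem (Finset.mem_univ k), nsmul_eq_mul,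
          Finset.card_univ, mul_one_div, div_lt_one hn]
        simp [Fintype.card_pos_iff.2 ⟨k⟩]
    _ ≤ |P k k| := hdiag k

/-- The `k`-th column of `N` comes from Minkowski's theorem in a box of half-widths `1 / n` off
the `k`-th coordinate, so `M * N` is strictly diagonally dominant. -/
theorem exists_intMatrix_det_mul_ne_zero_abs_le [Nonempty ι] (M : Matrix ι ι ℝ) (hM : M.det ≠ 0)
    (hsep : ∀ m : ι → ℤ, m ≠ 0 → ∃ i, 1 ≤ |(M *ᵥ fun j => (m j : ℝ)) i|) :
    ∃ N : Matrix ι ι ℤ, (M * N.map (Int.cast : ℤ → ℝ)).det ≠ 0 ∧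
      ∀ i k, |(M * N.map (Int.cast : ℤ → ℝ)) i k| ≤
        |M.det| * Fintype.card ι ^ (Fintype.card ι - 1) + 1 := by
  set n := Fintype.card ι
  set T := |M.det| * n ^ (n - 1) + 1
  have hn : (0 : ℝ) < n := by simp [n, Fintype.card_pos]
  have hnT : 1 / (n : ℝ) ≤ T := calc
    1 / (n : ℝ) ≤ 1 := by rw [div_le_one hn]; exact_mod_cast Fintype.card_pos
    _ ≤ T := le_add_of_nonneg_left (by positivity)
  have hcol : ∀ k, ∃ m : ι → ℤ, m ≠ 0 ∧
      ∀ i, |(M *ᵥ fun j => (m j : ℝ)) i| ≤ Function.update (fun _ => 1 / (n : ℝ)) k T i := by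
    intro k
    refine exists_ne_zero_abs_mulVec_intCast_le M hM _ (fun i => ?_) ?_
    · rcases eq_or_ne i k with rfl | hik
      · simp only [Function.update_self]; positivity
      · simp only [Function.update_of_ne hik]; positivity
    · rw [Finset.prod_update_of_mem (Finset.mem_univ k), Finset.prod_const, Finset.card_sdiff,
        Finset.card_univ, div_pow, one_pow, mul_one_div, le_div_iff₀ (by positivity)]
      simp [T, n]
  choose m hm0 hm using hcol
  have hP : M * (of fun i k => m k i).map (Int.cast : ℤ → ℝ) =
      of fun i k => (M *ᵥ fun j => (m k j : ℝ)) i := by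
    ext i k
    simp [mul_apply, mulVec, dotProduct]
  have hoff : ∀ i k, i ≠ k → |(M *ᵥ fun j => (m k j : ℝ)) i| ≤ 1 / n := fun i k hik => by
    simpa [hik] using hm k i
  have hdiag : ∀ k, 1 ≤ |(M *ᵥ fun j => (m k j : ℝ)) k| := by
    intro k
    obtain ⟨i, hi⟩ := hsep (m k) (hm0 k)
    rcases eq_or_ne i k with rfl | hik
    · exact hi
    · have hn2 : (1 : ℝ) < n := by exact_mod_cast Fintype.one_lt_card_iff.2 ⟨i, k, hik⟩
      have := hi.trans (hoff i k hik)
      rw [le_div_iff₀ hn, one_mul] at this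
      linarith
  refine ⟨of fun i k => m k i, hP ▸ det_ne_zero_of_one_le_abs_diag _ hdiag hoff,
    fun i k => ?_⟩
  rw [hP, of_apply]
  refine (hm k i).trans ?_
  rcases eq_or_ne i k with rfl | hik
  · simp
  · rw [Function.update_of_ne hik]; exact hnT

theorem abs_adjugate_apply_le (Q : Matrix ι ι ℝ) {c : ℝ} (hc : 1 ≤ c) (hQ : ∀ i j, |Q i j| ≤ c)
    (i j : ι) : |Q.adjugate i j| ≤ (Fintype.card ι)! * c ^ Fintype.card ι := by
  rw [adjugate_apply, ← nsmul_eq_mul]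
  refine det_le (abv := AbsoluteValue.abs) fun a b => ?_
  rw [updateRow_apply]
  split_ifs
  · rw [Pi.single_apply]; split_ifs <;> simp [hc, zero_le_one.trans hc]
  · exact hQ a b

theorem exists_abs_mulVec_intCast_sub_le (W : Matrix ι ι ℝ) (hW : W.det ≠ 0) {K : ℝ}
    (hK : ∀ i j, |W i j| ≤ K) (t : ι → ℝ) :
    ∃ k : ι → ℤ, ∀ i, |(W *ᵥ fun j => (k j : ℝ)) i - t i| ≤ Fintype.card ι * K / 2 := by
  set c := W⁻¹ *ᵥ t
  have hc : W *ᵥ c = t := by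
    rw [mulVec_mulVec, mul_nonsing_inv _ hW.isUnit, one_mulVec]
  refine ⟨fun j => round (c j), fun i => ?_⟩
  calc |(W *ᵥ fun j => (round (c j) : ℝ)) i - t i|
      = |∑ j, W i j * (round (c j) - c j)| := by
        rw [← hc]; simp only [mulVec, dotProduct, ← Finset.sum_sub_distrib, mul_sub]
    _ ≤ ∑ j, |W i j| * |round (c j) - c j| := by
        simpa only [abs_mul] using
          Finset.abs_sum_le_sum_abs (fun j => W i j * (round (c j) - c j)) Finset.univ
    _ ≤ ∑ _j : ι, K * (1 / 2) := Finset.sum_le_sum fun j _ =>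
        mul_le_mul (hK i j) (by rw [abs_sub_comm]; exact abs_sub_round _) (abs_nonneg _)
          ((abs_nonneg _).trans (hK i j))
    _ = Fintype.card ι * K / 2 := by simp; ring

/-- `n` times half the bound on the entries of `adjugate (M * N)ᵀ / det M`, with `M * N` as in
`exists_intMatrix_det_mul_ne_zero_abs_le`. -/
noncomputable def dualCoveringRadius (n : ℕ) (Δ : ℝ) : ℝ :=
  n * (n ! * (Δ * n ^ (n - 1) + 1) ^ n / Δ) / 2

theorem dualCoveringRadius_nonneg (n : ℕ) {Δ : ℝ} (hΔ : 0 ≤ Δ) : 0 ≤ dualCoveringRadius n Δ := by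
  unfold dualCoveringRadius; positivity

theorem exists_abs_transpose_inv_mulVec_intCast_sub_le [Nonempty ι] (M : Matrix ι ι ℝ)
    (hM : M.det ≠ 0) (hsep : ∀ m : ι → ℤ, m ≠ 0 → ∃ i, 1 ≤ |(M *ᵥ fun j => (m j : ℝ)) i|)
    (t : ι → ℝ) :
    ∃ m : ι → ℤ, ∀ i, |((Mᵀ)⁻¹ *ᵥ fun j => (m j : ℝ)) i - t i| ≤
      dualCoveringRadius (Fintype.card ι) |M.det| := by
  obtain ⟨N, hPdet, hPle⟩ := exists_intMatrix_det_mul_ne_zero_abs_le M hM hsep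
  set n := Fintype.card ι
  set Nc := N.map (Int.cast : ℤ → ℝ)
  set T := |M.det| * n ^ (n - 1) + 1
  set W := (Mᵀ)⁻¹ * Nc.adjugateᵀ
  have hW : M.det • W = (M * Nc)ᵀ.adjugate := by
    rw [transpose_mul, adjugate_mul_distrib, ← adjugate_transpose Nc, ← Matrix.smul_mul, inv_def,
      smul_smul, det_transpose, Ring.mul_inverse_cancel _ hM.isUnit, one_smul]
  have hWle : ∀ i j, |W i j| ≤ n ! * T ^ n / |M.det| := by
    intro i j
    rw [le_div_iff₀ (abs_pos.2 hM), mul_comm, ← abs_mul, ← smul_eq_mul, ← Matrix.smul_apply, hW]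
    exact abs_adjugate_apply_le _ (le_add_of_nonneg_left (by positivity)) (fun a b => hPle b a) i j
  have hWdet : W.det ≠ 0 := by
    have : (M.det • W).det ≠ 0 := by
      rw [hW, det_adjugate, det_transpose]; exact pow_ne_zero _ hPdet
    rw [det_smul] at this
    exact right_ne_zero_of_mul this
  obtain ⟨k, hk⟩ := exists_abs_mulVec_intCast_sub_le W hWdet hWle t
  refine ⟨N.adjugateᵀ *ᵥ k, fun i => ?_⟩
  have hcast : (fun j => ((N.adjugateᵀ *ᵥ k) j : ℝ)) = Nc.adjugateᵀ *ᵥ fun j => (k j : ℝ) := by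
    have hadj : N.adjugate.map (Int.cast : ℤ → ℝ) = Nc.adjugate :=
      (Int.castRingHom ℝ).map_adjugate N
    ext j
    rw [← hadj]
    exact RingHom.map_mulVec (Int.castRingHom ℝ) N.adjugateᵀ k j
  rw [hcast, mulVec_mulVec]
  exact (hk i).trans_eq (by simp only [dualCoveringRadius, n, T])

end Lattice

section Boxes

variable {ι : Type*} [Fintype ι] [Nonempty ι]

theorem exists_one_le_abs_of_one_le_abs_prod (v : ι → ℝ) (hv : 1 ≤ |∏ i, v i|) :
    ∃ i, 1 ≤ |v i| := by
  classical
  by_contra! hlt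
  obtain ⟨i₀⟩ := ‹Nonempty ι›
  have : |∏ i, v i| < 1 := calc
    |∏ i, v i| = |v i₀| * ∏ i ∈ Finset.univ.erase i₀, |v i| := by
      rw [Finset.abs_prod, Finset.mul_prod_erase _ (fun i => |v i|) (Finset.mem_univ i₀)]
    _ ≤ |v i₀| * 1 := by
      gcongr
      exact Finset.prod_le_one (fun i _ => abs_nonneg _) fun i _ => (hlt i).le
    _ < 1 := by rw [mul_one]; exact hlt i₀
  linarith

variable [DecidableEq ι]

theorem exists_pos_le_prod_eq {s : ι → ℝ} (hs : ∀ i, 0 < s i) {V : ℝ} (hV : 0 < V)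
    (hVs : V ≤ ∏ i, s i) : ∃ s' : ι → ℝ, (∀ i, 0 < s' i ∧ s' i ≤ s i) ∧ ∏ i, s' i = V := by
  obtain ⟨i₀⟩ := ‹Nonempty ι›
  have hprod : 0 < ∏ i, s i := Finset.prod_pos fun i _ => hs i
  have hr : 0 < V / ∏ i, s i := div_pos hV hprod
  have hr1 : V / ∏ i, s i ≤ 1 := (div_le_one hprod).2 hVs
  refine ⟨Function.update s i₀ (V / (∏ i, s i) * s i₀), fun i => ?_, ?_⟩
  · rcases eq_or_ne i i₀ with rfl | hi
    · simp only [Function.update_self]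
      exact ⟨mul_pos hr (hs i), mul_le_of_le_one_left (hs i).le hr1⟩
    · simp only [Function.update_of_ne hi]
      exact ⟨hs i, le_rfl⟩
  · rw [Finset.prod_update_of_mem (Finset.mem_univ i₀), mul_assoc,
      ← Finset.prod_eq_mul_prod_sdiff_singleton_of_mem (Finset.mem_univ i₀),
      div_mul_cancel₀ _ hprod.ne']

/-- Rescaling by `diagonal δ` with `∏ δ = 1` makes the box a cube of side `ℓ` without changing
`|det A|` or the products of coordinates of lattice points. -/
theorem exists_transpose_inv_mulVec_intCast_mem_box (A : Matrix ι ι ℝ) (hA : A.det ≠ 0)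
    (hprod : ∀ m : ι → ℤ, m ≠ 0 → 1 ≤ |∏ i, (A *ᵥ fun j => (m j : ℝ)) i|)
    {ℓ : ℝ} (hℓ : 2 * dualCoveringRadius (Fintype.card ι) |A.det| < ℓ)
    (x s : ι → ℝ) (hs : ∀ i, 0 < s i) (hvol : ∏ i, s i = ℓ ^ Fintype.card ι) :
    ∃ m : ι → ℤ, ∀ i, x i < ((A⁻¹)ᵀ *ᵥ fun j => (m j : ℝ)) i ∧
      ((A⁻¹)ᵀ *ᵥ fun j => (m j : ℝ)) i < x i + s i := by
  have hℓ0 : 0 < ℓ := by linarith [dualCoveringRadius_nonneg (Fintype.card ι) (abs_nonneg A.det)]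
  set δ : ι → ℝ := fun i => s i / ℓ
  have hδ : ∀ i, 0 < δ i := fun i => div_pos (hs i) hℓ0
  have hδprod : ∏ i, δ i = 1 := by
    simp only [δ, Finset.prod_div_distrib, hvol, Finset.prod_const, Finset.card_univ]
    exact div_self (by positivity)
  set M := diagonal δ * A
  have hMdet : M.det = A.det := by rw [det_mul, det_diagonal, hδprod, one_mul]
  have hMsep : ∀ m : ι → ℤ, m ≠ 0 → ∃ i, 1 ≤ |(M *ᵥ fun j => (m j : ℝ)) i| := by
    intro m hm
    refine exists_one_le_abs_of_one_le_abs_prod _ ?_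
    simpa only [M, ← mulVec_mulVec, mulVec_diagonal, Finset.prod_mul_distrib, hδprod, one_mul]
      using hprod m hm
  have hMinv : (Mᵀ)⁻¹ = diagonal δ⁻¹ * (A⁻¹)ᵀ := by
    refine inv_eq_left_inv ?_
    rw [transpose_mul, diagonal_transpose, Matrix.mul_assoc, ← Matrix.mul_assoc (A⁻¹)ᵀ,
      ← transpose_mul, mul_nonsing_inv _ hA.isUnit, transpose_one, Matrix.one_mul,
      diagonal_mul_diagonal, ← diagonal_one]
    exact congrArg diagonal (funext fun i => inv_mul_cancel₀ (hδ i).ne')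
  obtain ⟨m, hm⟩ := exists_abs_transpose_inv_mulVec_intCast_sub_le M (hMdet ▸ hA) hMsep
    fun i => (x i + s i / 2) / δ i
  refine ⟨m, fun i => ?_⟩
  have hmi := hm i
  rw [hMinv, ← mulVec_mulVec, mulVec_diagonal, Pi.inv_apply, inv_mul_eq_div, hMdet] at hmi
  set p := (A⁻¹)ᵀ *ᵥ fun j => (m j : ℝ)
  have hclose : |p i - (x i + s i / 2)| < s i / 2 := calc
    |p i - (x i + s i / 2)| = |p i / δ i - (x i + s i / 2) / δ i| * δ i := by
      rw [← sub_div, abs_div, abs_of_pos (hδ i), div_mul_cancel₀ _ (hδ i).ne']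
    _ ≤ dualCoveringRadius (Fintype.card ι) |A.det| * δ i :=
      mul_le_mul_of_nonneg_right hmi (hδ i).le
    _ < ℓ / 2 * δ i := mul_lt_mul_of_pos_right (by linarith) (hδ i)
    _ = s i / 2 := by simp only [δ]; field_simp
  constructor <;> linarith [abs_sub_lt_iff.1 hclose]

end Boxes

theorem frolov_dispersion (d : ℕ) (hd : 2 ≤ d) (A : Matrix (Fin d) (Fin d) ℝ)
    (hA : IsUnit A.det)
    (h1 : ∀ m : Fin d → ℤ, m ≠ 0 → 1 ≤ |∏ j, A.mulVec (fun i => (m i : ℝ)) j|) :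
    ∃ C : ℝ, 0 < C ∧ ∀ a : ℝ, 1 < a → ∀ x y : Fin d → ℝ,
      (∀ j, 0 ≤ x j) → (∀ j, x j < y j) → (∀ j, y j ≤ 1) →
      (∀ m : Fin d → ℤ,
        (∀ j, a⁻¹ * (A⁻¹)ᵀ.mulVec (fun i => (m i : ℝ)) j ∈ Set.Icc (0 : ℝ) 1) →
        ¬ (∀ j, a⁻¹ * (A⁻¹)ᵀ.mulVec (fun i => (m i : ℝ)) j ∈ Set.Ico (x j) (y j))) →
      ∏ j, (y j - x j) ≤ C / a ^ d := by
  have : Nonempty (Fin d) := ⟨⟨0, by omega⟩⟩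
  set ℓ := 2 * dualCoveringRadius d |A.det| + 1
  have hℓ : 0 < ℓ := by linarith [dualCoveringRadius_nonneg d (abs_nonneg A.det)]
  refine ⟨ℓ ^ d, by positivity, fun a ha x y hx hxy hy hempty => ?_⟩
  by_contra! hbig
  have ha0 : 0 < a := by linarith
  obtain ⟨s, hs, hsprod⟩ := exists_pos_le_prod_eq (s := fun j => a * (y j - x j))
    (fun j => mul_pos ha0 (sub_pos.2 (hxy j))) (pow_pos hℓ d) (by
      rw [Finset.prod_mul_distrib, Finset.prod_const, Finset.card_univ, Fintype.card_fin]
      rw [div_lt_iff₀ (by positivity)] at hbig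
      linarith)
  obtain ⟨m, hm⟩ := exists_transpose_inv_mulVec_intCast_mem_box A hA.ne_zero h1
    (by rw [Fintype.card_fin]; exact lt_add_one _)
    (fun j => a * x j) s (fun j => (hs j).1) (by rw [hsprod, Fintype.card_fin])
  have hmem : ∀ j, a⁻¹ * ((A⁻¹)ᵀ *ᵥ fun i => (m i : ℝ)) j ∈ Set.Ioo (x j) (y j) := fun j =>
    ⟨(lt_inv_mul_iff₀ ha0).2 (hm j).1,
      (inv_mul_lt_iff₀ ha0).2 (by linarith [(hm j).2, (hs j).2])⟩
  exact hempty m (fun j => ⟨(hx j).trans (hmem j).1.le, (hmem j).2.le.trans (hy j)⟩)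
    fun j => ⟨(hmem j).1.le, (hmem j).2⟩
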